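/- arXiv:1512.06994 — 2 statements merged into one kernel-verified Lean document; each statement's English description precedes it below -/
import Mathlib

section
/- Let A be a unital associative ℂ-algebra and g_1, g_2 ∈ A satisfy the Hecke relations g_i² = (α+β)g_i − αβ·1 and the braid relation g_1 g_2 g_1 = g_2 g_1 g_2, with α + β ≠ 0. Define g_i(z) = g_i + ((α+β)/(z−1))·1 for z ∈ ℂ \ {1}. Then for all z, w with z, w, zw ≠ 1 the Baxterized Yang–Baxter equation holds: g_1(w) g_2(zw) g_1(z) = g_2(z) g_1(zw) g_2(w). -/
theorem baxterized_yang_baxter (A : Type*) [Ring A] [Algebra ℂ A]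
    (α β : ℂ) (hab : α + β ≠ 0) (g₁ g₂ : A)
    (h1 : g₁ * g₁ = (α + β) • g₁ - (α * β) • (1 : A))
    (h2 : g₂ * g₂ = (α + β) • g₂ - (α * β) • (1 : A))
    (hbr : g₁ * g₂ * g₁ = g₂ * g₁ * g₂)
    (z w : ℂ) (hz : z ≠ 1) (hw : w ≠ 1) (hzw : z * w ≠ 1) :
    (g₁ + ((α + β) / (w - 1)) • (1 : A)) * (g₂ + ((α + β) / (z * w - 1)) • (1 : A)) *
        (g₁ + ((α + β) / (z - 1)) • (1 : A))
      = (g₂ + ((α + β) / (z - 1)) • (1 : A)) * (g₁ + ((α + β) / (z * w - 1)) • (1 : A)) *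
        (g₂ + ((α + β) / (w - 1)) • (1 : A)) := by
  have hw1 : w - 1 ≠ 0 := sub_ne_zero.mpr hw
  have hz1 : z - 1 ≠ 0 := sub_ne_zero.mpr hz
  have hzw1 : z * w - 1 ≠ 0 := sub_ne_zero.mpr hzw
  simp only [mul_add, add_mul, smul_mul_assoc, mul_smul_comm, smul_smul, one_mul, mul_one,
    mul_assoc] at *
  rw [h1, h2, hbr]
  match_scalars <;> field_simp <;> ring
end

section
/- Let H_n(α,β) be the Hecke algebra with generators h_1, ..., h_{n-1} satisfying h_i² = (α+β)h_i − αβ, braid relations, and commutation for distant indices, with αβ ≠ 0. Define J_1 = 1 and J_i = (−αβ)^{-1} h_{n+1−i} J_{i−1} h_{n+1−i} for 2 ≤ i ≤ n. Then J_i J_j = J_j J_i for all i, j. -/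
lemma jm_abstract {A : Type*} [Ring A] (a b X : A) (hba : b * a * b = a * b * a)
    (hXb : X * b = b * X) (hIH : X * a * (X * a) = a * X * (a * X)) :
    a * X * a * b * (a * X * a) * b = b * (a * X * a) * b * (a * X * a) := by
  have H1 : ∀ x : A, a * (b * (a * x)) = b * (a * (b * x)) := fun x => by
    rw [← mul_assoc, ← mul_assoc, ← hba, mul_assoc, mul_assoc]
  have H2 : ∀ x : A, X * (b * x) = b * (X * x) := fun x => by
    rw [← mul_assoc, hXb, mul_assoc]
  have H3 : ∀ x : A, X * (a * (X * (a * x))) = a * (X * (a * (X * x))) := fun x => by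
    rw [← mul_assoc, ← mul_assoc, ← mul_assoc, show X*a*X*a = a*X*(a*X) by rw [mul_assoc (X*a) X a, hIH], mul_assoc, mul_assoc, mul_assoc]
  have Hbr : b * (a * b) = a * (b * a) := by
    rw [← mul_assoc, hba, mul_assoc]
  simp only [mul_assoc]
  conv_lhs => rw [H1 (X * (a * b)), H2 (a * (b * (X * (a * b)))), ← H2 (a * b), Hbr,
    H3 (b * a), H2 a]
  conv_rhs => rw [H1 (X * a), H2 (a * (b * (X * a))), ← H1 (X * (a * (b * (X * a))))]

section
variable {A : Type*} [Ring A] [Algebra ℂ A] (n : ℕ) (c : ℂ) (h J : ℕ → A)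

/-- J i commutes with h m for m ≤ n - 1 - i. -/
lemma jm_comm_h
    (hcm : ∀ i j : ℕ, 1 ≤ i → i + 2 ≤ j → j ≤ n - 1 → h i * h j = h j * h i)
    (hJ1 : J 1 = 1)
    (hJrec : ∀ i : ℕ, 2 ≤ i → i ≤ n →
      J i = c • (h (n + 1 - i) * J (i - 1) * h (n + 1 - i))) :
    ∀ i : ℕ, 1 ≤ i → i ≤ n → ∀ m : ℕ, 1 ≤ m → m + 1 + i ≤ n →
      h m * J i = J i * h m := by
  intro i
  induction i with
  | zero => intro h1; omega
  | succ k IH =>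
    intro _ hkn m hm1 hmn
    rcases Nat.eq_zero_or_pos k with hk0 | hk1
    · subst hk0; rw [hJ1, one_mul, mul_one]
    · have hrec := hJrec (k + 1) (by omega) hkn
      simp only [Nat.add_sub_cancel] at hrec
      have hgen : h m * h (n + 1 - (k + 1)) = h (n + 1 - (k + 1)) * h m := by
        apply hcm m (n + 1 - (k+1)) hm1 (by omega) (by omega)
      have hJk : h m * J k = J k * h m := IH hk1 (by omega) m hm1 (by omega)
      rw [hrec, mul_smul_comm, smul_mul_assoc]
      congr 1
      rw [← mul_assoc, ← mul_assoc, hgen, mul_assoc (h (n+1-(k+1))) (h m), hJk,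
        ← mul_assoc, mul_assoc, mul_assoc, mul_assoc, hgen, ← mul_assoc, ← mul_assoc]

/-- key lemma: J i commutes with h (n-i) * J i * h (n-i). -/
lemma jm_key
    (hbr : ∀ i : ℕ, 1 ≤ i → i + 1 ≤ n - 1 →
      h i * h (i + 1) * h i = h (i + 1) * h i * h (i + 1))
    (hcm : ∀ i j : ℕ, 1 ≤ i → i + 2 ≤ j → j ≤ n - 1 → h i * h j = h j * h i)
    (hJ1 : J 1 = 1)
    (hJrec : ∀ i : ℕ, 2 ≤ i → i ≤ n →
      J i = c • (h (n + 1 - i) * J (i - 1) * h (n + 1 - i))) :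
    ∀ i : ℕ, 1 ≤ i → i + 1 ≤ n →
      J i * h (n - i) * (J i) * h (n - i) = h (n - i) * J i * h (n - i) * J i := by
  intro i
  induction i with
  | zero => intro h1; omega
  | succ k IH =>
    intro _ hkn
    rcases Nat.eq_zero_or_pos k with hk0 | hk1
    · subst hk0; simp [hJ1]
    · have hrec := hJrec (k + 1) (by omega) (by omega)
      simp only [Nat.add_sub_cancel] at hrec
      have e1 : n + 1 - (k + 1) = n - k := by omega
      rw [e1] at hrec
      set a := h (n - k) with ha
      set b := h (n - (k + 1)) with hb
      have hba : b * a * b = a * b * a := by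
        have e2 : n - (k + 1) + 1 = n - k := by omega
        have := hbr (n - (k + 1)) (by omega) (by omega)
        rwa [e2] at this
      have hXb : J k * b = b * J k := by
        exact (jm_comm_h n c h J hcm hJ1 hJrec k hk1 (by omega) (n - (k+1))
          (by omega) (by omega)).symm
      have hIH : J k * a * (J k * a) = a * J k * (a * J k) := by
        have := IH hk1 (by omega)
        rw [← mul_assoc, this, mul_assoc]
      rw [hrec]
      simp only [smul_mul_assoc, mul_smul_comm]
      congr 1
      congr 1
      exact jm_abstract a b (J k) hba hXb hIH

lemma jm_main
    (hbr : ∀ i : ℕ, 1 ≤ i → i + 1 ≤ n - 1 →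
      h i * h (i + 1) * h i = h (i + 1) * h i * h (i + 1))
    (hcm : ∀ i j : ℕ, 1 ≤ i → i + 2 ≤ j → j ≤ n - 1 → h i * h j = h j * h i)
    (hJ1 : J 1 = 1)
    (hJrec : ∀ i : ℕ, 2 ≤ i → i ≤ n →
      J i = c • (h (n + 1 - i) * J (i - 1) * h (n + 1 - i))) :
    ∀ j : ℕ, j ≤ n → ∀ i : ℕ, 1 ≤ i → i ≤ j → J i * J j = J j * J i := by
  intro j
  induction j with
  | zero => intro _ i hi1 hij; omega
  | succ k IH =>
    intro hkn i hi1 hij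
    rcases Nat.lt_or_ge i (k + 1) with hlt | hge
    · have hik : i ≤ k := by omega
      have hk1 : 1 ≤ k := by omega
      have hrec := hJrec (k + 1) (by omega) hkn
      simp only [Nat.add_sub_cancel] at hrec
      rcases Nat.eq_or_lt_of_le hik with heq | hlt2
      · -- i = k, adjacent case
        subst heq
        have e1 : n + 1 - (i + 1) = n - i := by omega
        rw [e1] at hrec
        have key := jm_key n c h J hbr hcm hJ1 hJrec i hi1 (by omega)
        rw [hrec, mul_smul_comm, smul_mul_assoc]
        congr 1
        calc J i * (h (n - i) * J i * h (n - i))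
            = J i * h (n - i) * J i * h (n - i) := by
              rw [← mul_assoc, ← mul_assoc]
          _ = h (n - i) * J i * h (n - i) * J i := key
          _ = h (n - i) * J i * h (n - i) * J i := rfl
      · -- i ≤ k - 1, distant case
        have hcomm : h (n + 1 - (k + 1)) * J i = J i * h (n + 1 - (k + 1)) :=
          jm_comm_h n c h J hcm hJ1 hJrec i hi1 (by omega) (n + 1 - (k + 1))
            (by omega) (by omega)
        have hJk : J i * J k = J k * J i := IH (by omega) i hi1 hik
        rw [hrec, mul_smul_comm, smul_mul_assoc]
        congr 1
        rw [← mul_assoc, ← mul_assoc, ← hcomm, mul_assoc (h (n+1-(k+1))) (J i), hJk,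
          ← mul_assoc, mul_assoc, mul_assoc, mul_assoc, ← hcomm, ← mul_assoc, ← mul_assoc]
    · have : i = k + 1 := by omega
      subst this
      rfl

end

theorem hecke_jucys_murphy_commute (A : Type*) [Ring A] [Algebra ℂ A]
    (n : ℕ) (α β : ℂ) (hαβ : α * β ≠ 0) (h : ℕ → A)
    (hquad : ∀ i : ℕ, 1 ≤ i → i ≤ n - 1 →
      h i * h i = (α + β) • h i - (α * β) • (1 : A))
    (hbr : ∀ i : ℕ, 1 ≤ i → i + 1 ≤ n - 1 →
      h i * h (i + 1) * h i = h (i + 1) * h i * h (i + 1))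
    (hcm : ∀ i j : ℕ, 1 ≤ i → i + 2 ≤ j → j ≤ n - 1 → h i * h j = h j * h i)
    (J : ℕ → A) (hJ1 : J 1 = 1)
    (hJrec : ∀ i : ℕ, 2 ≤ i → i ≤ n →
      J i = (-(α * β))⁻¹ • (h (n + 1 - i) * J (i - 1) * h (n + 1 - i)))
    (i j : ℕ) (hi1 : 1 ≤ i) (hin : i ≤ n) (hj1 : 1 ≤ j) (hjn : j ≤ n) :
    J i * J j = J j * J i := by
  rcases le_total i j with hij | hji
  · exact jm_main n (-(α * β))⁻¹ h J hbr hcm hJ1 hJrec j hjn i hi1 hij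
  · exact (jm_main n (-(α * β))⁻¹ h J hbr hcm hJ1 hJrec i hin j hj1 hji).symm
end
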